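/- arXiv:1203.5948 — 6 statements merged into one kernel-verified Lean document; each statement's English description precedes it below -/
import Mathlib

section
/- A finite poset P = (X, ≤) is an interval order (i.e., admits a representation by closed real intervals J(x) = [a_x, b_x] with x < y iff b_x < a_y) if and only if P contains no subposet isomorphic to 2+2, the disjoint union of two 2-element chains. -/
/-- The principal down-set `I(x) = {z | z < x}` (excluding `x`). -/
def Iset {X : Type*} [PartialOrder X] (x : X) : Set X := {z | z < x}

/-- The principal up-set `F(x) = {z | z > x}` (excluding `x`). -/
def Fset {X : Type*} [PartialOrder X] (x : X) : Set X := {z | x < z}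

/-- Order equivalence: same principal down-set and up-set. -/
def OrdEquiv {X : Type*} [PartialOrder X] (x y : X) : Prop :=
  Iset x = Iset y ∧ Fset x = Fset y

/-- Incomparability. -/
def Incomp {X : Type*} [PartialOrder X] (a b : X) : Prop := ¬ a ≤ b ∧ ¬ b ≤ a

/-- `P` avoids the poset `2+2`: no two 2-chains with all cross pairs incomparable. -/
def Avoids22 (X : Type*) [PartialOrder X] : Prop :=
  ¬ ∃ a b c d : X, a < b ∧ c < d ∧
    Incomp a c ∧ Incomp a d ∧ Incomp b c ∧ Incomp b d

/-- `P` is an interval order: it has a representation by closed real intervals. -/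
def IsIntervalOrder (X : Type*) [PartialOrder X] : Prop :=
  ∃ a b : X → ℝ, (∀ x, a x ≤ b x) ∧ ∀ x y : X, x < y ↔ b x < a y

/-- An admissible labelling: a linear extension `λ : X → Fin |X|` such that
`λ x < λ y` implies `I(x) ⊊ I(y)`, or `I(x) = I(y)` and `F(x) ⊊ F(y)`, or `x ∼ y`. -/
def IsAdmissible {X : Type*} [PartialOrder X] [Fintype X]
    (lab : X ≃ Fin (Fintype.card X)) : Prop :=
  (∀ x y : X, x < y → lab x < lab y) ∧
  ∀ x y : X, lab x < lab y →
    Iset x ⊂ Iset y ∨ (Iset x = Iset y ∧ Fset x ⊂ Fset y) ∨ OrdEquiv x y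


/-!
A 2+2 drawn with intervals would give `b p < a q ≤ b r < a s ≤ b p`, a cycle.

Conversely, if `P` avoids 2+2, then the strict down-sets `I(x)` are totally ordered by inclusion
(two incomparable ones, witnessed by `u ∈ I(x) \ I(y)` and `v ∈ I(y) \ I(x)`, give the 2+2
`u < x`, `v < y`). Let `y` start at the number of `z` with `I(z) ⊊ I(y)` and let `x` end just
before the number of `z` with `x ≮ z`. If `x < y`, every `z` with `x ≮ z` has `x ∈ I(y) \ I(z)`,
hence `I(z) ⊊ I(y)` by totality; if `x ≮ y`, every `z` with `I(z) ⊊ I(y)` satisfies `x ≮ z`,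
and `y` itself is counted in the second set only.
-/

section

variable {X : Type*} [PartialOrder X]

theorem IsIntervalOrder.avoids22 (h : IsIntervalOrder X) : Avoids22 X := by
  obtain ⟨a, b, -, hlt⟩ := h
  rintro ⟨p, q, r, s, hpq, hrs, -, hps, hqr, -⟩
  have hp_q := (hlt p q).1 hpq
  have hr_s := (hlt r s).1 hrs
  have hs_p : a s ≤ b p := not_lt.1 fun h => hps.1 ((hlt p s).2 h).le
  have hq_r : a q ≤ b r := not_lt.1 fun h => hqr.2 ((hlt r q).2 h).le
  linarith

theorem Avoids22.iset_subset_or_subset (h : Avoids22 X) (x y : X) :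
    Iset x ⊆ Iset y ∨ Iset y ⊆ Iset x := by
  by_contra! hxy
  obtain ⟨⟨u, hux, huy⟩, ⟨v, hvy, hvx⟩⟩ := And.imp Set.not_subset.1 Set.not_subset.1 hxy
  simp only [Iset, Set.mem_ofPred_eq] at hux huy hvy hvx
  refine h ⟨u, x, v, y, hux, hvy, ?_⟩
  simp only [Incomp]
  refine ⟨⟨?_, ?_⟩, ⟨?_, ?_⟩, ⟨?_, ?_⟩, ⟨?_, ?_⟩⟩ <;> intro <;> order

variable [Fintype X]

open Finset

open Classical in
noncomputable def strictlyBelowCount (y : X) : ℕ := #{z | Iset z ⊂ Iset y}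

open Classical in
noncomputable def notAboveCount (x : X) : ℕ := #{z | ¬ x < z}

theorem strictlyBelowCount_lt_notAboveCount {x y : X} (hxy : ¬ x < y) :
    strictlyBelowCount y < notAboveCount x := by
  classical
  refine card_lt_card ⟨fun z hz => ?_, fun hsub => ?_⟩
  · simp only [mem_filter, mem_univ, true_and] at hz ⊢
    exact fun hxz => hxy (hz.1 hxz)
  · have hy := hsub (mem_filter.2 ⟨mem_univ y, hxy⟩)
    exact (mem_filter.1 hy).2.2 subset_rfl

theorem Avoids22.notAboveCount_le_strictlyBelowCount (h : Avoids22 X) {x y : X} (hxy : x < y) :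
    notAboveCount x ≤ strictlyBelowCount y := by
  classical
  refine card_le_card fun z hz => ?_
  simp only [mem_filter, mem_univ, true_and] at hz ⊢
  have hyz : ¬ Iset y ⊆ Iset z := fun hyz => hz (hyz hxy)
  exact ⟨(h.iset_subset_or_subset z y).resolve_right hyz, hyz⟩

theorem Avoids22.strictlyBelowCount_lt_notAboveCount_iff (h : Avoids22 X) {x y : X} :
    strictlyBelowCount y < notAboveCount x ↔ ¬ x < y :=
  ⟨fun hlt hxy => (h.notAboveCount_le_strictlyBelowCount hxy).not_gt hlt,
    strictlyBelowCount_lt_notAboveCount⟩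

theorem Avoids22.isIntervalOrder (h : Avoids22 X) : IsIntervalOrder X := by
  refine ⟨fun y => strictlyBelowCount y, fun x => notAboveCount x - 1, fun x => ?_, fun x y => ?_⟩ <;>
    dsimp only
  · rw [le_sub_iff_add_le]
    exact_mod_cast strictlyBelowCount_lt_notAboveCount (lt_irrefl x)
  · rw [sub_lt_iff_lt_add, ← not_iff_not, not_lt, ← h.strictlyBelowCount_lt_notAboveCount_iff,
      ← Nat.add_one_le_iff]
    norm_cast

end

theorem stmt1 {X : Type*} [PartialOrder X] [Fintype X] :
    IsIntervalOrder X ↔ Avoids22 X :=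
  ⟨IsIntervalOrder.avoids22, Avoids22.isIntervalOrder⟩
end

section
/- Every finite interval order admits an admissible labelling: a linear extension λ: X → {1,…,|X|} such that for all x, y, if λ(x) < λ(y) then either I(x) ⊊ I(y), or I(x) = I(y) and F(x) ⊊ F(y), or x ∼ y. -/
/-!
In a `2+2`-free poset the down-sets `I(x)` form a chain under inclusion, and so do the up-sets
`F(x)`. Within a chain of finite sets, inclusion is read off from cardinalities, so sorting `X`
lexicographically by `(|I(x)|, |F(x)|)`, with ties broken arbitrarily, gives an admissible
labelling; it is a linear extension because `x < y` forces `I(x) ⊊ I(y)`.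
-/

lemma Avoids22.lt_or_lt {X : Type*} [PartialOrder X] (h : Avoids22 X) {a b c d : X}
    (hab : a < b) (hcd : c < d) : a < d ∨ c < b := by
  by_contra! hc
  obtain ⟨had, hcb⟩ := hc
  refine h ⟨a, b, c, d, hab, hcd, ?_, ?_, ?_, ?_⟩ <;>
    constructor <;> intro <;> order

lemma Avoids22.Iset_subset_total {X : Type*} [PartialOrder X] (h : Avoids22 X) (x y : X) :
    Iset x ⊆ Iset y ∨ Iset y ⊆ Iset x := by
  by_contra! hc
  obtain ⟨u, hux : u < x, huy : ¬ u < y⟩ := Set.not_subset.mp hc.1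
  obtain ⟨v, hvy : v < y, hvx : ¬ v < x⟩ := Set.not_subset.mp hc.2
  exact (h.lt_or_lt hux hvy).elim huy hvx

lemma Avoids22.Fset_subset_total {X : Type*} [PartialOrder X] (h : Avoids22 X) (x y : X) :
    Fset x ⊆ Fset y ∨ Fset y ⊆ Fset x := by
  by_contra! hc
  obtain ⟨u, hxu : x < u, hyu : ¬ y < u⟩ := Set.not_subset.mp hc.1
  obtain ⟨v, hyv : y < v, hxv : ¬ x < v⟩ := Set.not_subset.mp hc.2
  exact (h.lt_or_lt hxu hyv).elim hxv hyu

lemma Iset_ssubset_Iset_of_lt {X : Type*} [PartialOrder X] {x y : X} (hxy : x < y) :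
    Iset x ⊂ Iset y :=
  ⟨fun _ hz => lt_trans hz hxy, fun hyx => lt_irrefl x (hyx hxy)⟩

section TotalNcard

variable {α : Type*} [Finite α] {s t : Set α}

lemma Set.subset_of_ncard_le_of_total (hst : s ⊆ t ∨ t ⊆ s) (h : s.ncard ≤ t.ncard) :
    s ⊆ t :=
  hst.elim id fun hts => (Set.eq_of_subset_of_ncard_le hts h).ge

lemma Set.ssubset_of_ncard_lt_of_total (hst : s ⊆ t ∨ t ⊆ s) (h : s.ncard < t.ncard) :
    s ⊂ t :=
  (Set.subset_of_ncard_le_of_total hst h.le).ssubset_of_ne (by rintro rfl; exact h.false)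

lemma Set.eq_of_ncard_eq_of_total (hst : s ⊆ t ∨ t ⊆ s) (h : s.ncard = t.ncard) : s = t :=
  (Set.subset_of_ncard_le_of_total hst h.le).antisymm
    (Set.subset_of_ncard_le_of_total hst.symm h.ge)

end TotalNcard

lemma exists_equiv_fin_lt_of_key_lt {X α : Type*} [Fintype X] [LinearOrder α] (key : X → α) :
    ∃ lab : X ≃ Fin (Fintype.card X), ∀ x y, key x < key y → lab x < lab y := by
  let e := Fintype.equivFin X
  let fullKey : X → α ×ₗ Fin (Fintype.card X) := fun x => toLex (key x, e x)
  let _ : LinearOrder X :=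
    LinearOrder.lift' fullKey fun x y hxy => e.injective (congrArg (·.2) hxy)
  let iso := (Fintype.orderIsoFinOfCardEq X rfl).symm
  refine ⟨iso.toEquiv, fun x y hxy => iso.lt_iff_lt.mpr ?_⟩
  exact Prod.Lex.lt_iff.mpr (Or.inl hxy)

theorem stmt4 {X : Type*} [PartialOrder X] [Fintype X] (h : Avoids22 X) :
    ∃ lab : X ≃ Fin (Fintype.card X), IsAdmissible lab := by
  obtain ⟨lab, hlab⟩ := exists_equiv_fin_lt_of_key_lt
    fun x : X => toLex ((Iset x).ncard, (Fset x).ncard)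
  refine ⟨lab, fun x y hxy => hlab x y ?_, fun x y hxy => ?_⟩
  · exact Prod.Lex.lt_iff.mpr (Or.inl (Set.ncard_lt_ncard (Iset_ssubset_Iset_of_lt hxy)))
  have hkey : toLex ((Iset x).ncard, (Fset x).ncard) ≤ toLex ((Iset y).ncard, (Fset y).ncard) :=
    not_lt.mp fun hyx => (hlab y x hyx).asymm hxy
  rcases Prod.Lex.le_iff.mp hkey with hI | ⟨hI, hF⟩
  · exact Or.inl (Set.ssubset_of_ncard_lt_of_total (h.Iset_subset_total x y) hI)
  have hIeq := Set.eq_of_ncard_eq_of_total (h.Iset_subset_total x y) hI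
  rcases hF.lt_or_eq with hF | hF
  · exact Or.inr (Or.inl ⟨hIeq, Set.ssubset_of_ncard_lt_of_total (h.Fset_subset_total x y) hF⟩)
  · exact Or.inr (Or.inr ⟨hIeq, Set.eq_of_ncard_eq_of_total (h.Fset_subset_total x y) hF⟩)
end

section
/- If λ₁ and λ₂ are two admissible labellings of a finite interval order P and λ₁(x) = λ₂(y) for elements x, y, then x ∼ y. -/
/-- The auxiliary strict relation used in admissibility. -/
def Rlt {X : Type*} [PartialOrder X] (x y : X) : Prop :=
  Iset x ⊂ Iset y ∨ (Iset x = Iset y ∧ Fset x ⊂ Fset y)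

lemma Rlt_irrefl {X : Type*} [PartialOrder X] (x : X) : ¬ Rlt x x := by
  rintro (h | ⟨_, h⟩) <;> exact ssubset_irrefl _ h

lemma Rlt_trans {X : Type*} [PartialOrder X] {x y z : X}
    (h1 : Rlt x y) (h2 : Rlt y z) : Rlt x z := by
  rcases h1 with h1 | ⟨e1, f1⟩ <;> rcases h2 with h2 | ⟨e2, f2⟩
  · exact Or.inl (h1.trans h2)
  · exact Or.inl (e2 ▸ h1)
  · exact Or.inl (e1.symm ▸ h2)
  · exact Or.inr ⟨e1.trans e2, f1.trans f2⟩

lemma Rlt_of_equiv_left {X : Type*} [PartialOrder X] {x x' y : X}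
    (he : OrdEquiv x x') (h : Rlt x y) : Rlt x' y := by
  unfold Rlt at *
  rw [← he.1, ← he.2]
  exact h

lemma Rlt_of_equiv_right {X : Type*} [PartialOrder X] {x y y' : X}
    (he : OrdEquiv y y') (h : Rlt x y) : Rlt x y' := by
  unfold Rlt at *
  rw [← he.1, ← he.2]
  exact h

lemma OrdEquiv_refl {X : Type*} [PartialOrder X] (x : X) : OrdEquiv x x := ⟨rfl, rfl⟩

lemma OrdEquiv_symm {X : Type*} [PartialOrder X] {x y : X}
    (h : OrdEquiv x y) : OrdEquiv y x := ⟨h.1.symm, h.2.symm⟩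

lemma OrdEquiv_trans {X : Type*} [PartialOrder X] {x y z : X}
    (h1 : OrdEquiv x y) (h2 : OrdEquiv y z) : OrdEquiv x z :=
  ⟨h1.1.trans h2.1, h1.2.trans h2.2⟩

lemma not_Rlt_and_equiv {X : Type*} [PartialOrder X] {x y : X}
    (h : Rlt x y) (he : OrdEquiv x y) : False :=
  Rlt_irrefl x (Rlt_of_equiv_right (OrdEquiv_symm he) h)

/-- A down-closed finset of `Fin n` is an initial segment. -/
lemma downclosed_iff {n : ℕ} (T : Finset (Fin n))
    (hdc : ∀ i ∈ T, ∀ j : Fin n, j < i → j ∈ T) (i : Fin n) :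
    i ∈ T ↔ i.val < T.card := by
  constructor
  · intro hi
    have hsub : Finset.Iic i ⊆ T := by
      intro j hj
      rcases lt_or_eq_of_le (Finset.mem_Iic.mp hj) with hlt | heq
      · exact hdc i hi j hlt
      · exact heq ▸ hi
    have := Finset.card_le_card hsub
    rw [Fin.card_Iic] at this
    omega
  · intro hi
    by_contra hni
    have hsub : T ⊆ Finset.Iio i := by
      intro j hj
      rw [Finset.mem_Iio]
      rcases lt_or_ge j i with hlt | hle
      · exact hlt
      · rcases lt_or_eq_of_le hle with hlt | heq
        · exact absurd (hdc j hj i hlt) hni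
        · exact absurd (heq ▸ hj) hni
    have := Finset.card_le_card hsub
    rw [Fin.card_Iio] at this
    omega

lemma mem_iff_lt_card {X : Type*} [PartialOrder X] [Fintype X] [DecidableEq X]
    (lab : X ≃ Fin (Fintype.card X)) (hadm : IsAdmissible lab)
    (P : X → Prop) [DecidablePred P]
    (hP : ∀ z w, P z → (Rlt w z ∨ OrdEquiv w z) → P w) (x : X) :
    P x ↔ (lab x).val < (Finset.univ.filter P).card := by
  set T : Finset (Fin (Fintype.card X)) := (Finset.univ.filter P).image lab with hT
  have hcard : T.card = (Finset.univ.filter P).card :=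
    Finset.card_image_of_injective _ lab.injective
  have hdc : ∀ i ∈ T, ∀ j : Fin (Fintype.card X), j < i → j ∈ T := by
    intro i hi j hj
    rw [hT, Finset.mem_image] at hi
    obtain ⟨z, hz, hz2⟩ := hi
    have hPz : P z := (Finset.mem_filter.mp hz).2
    set w := lab.symm j with hw
    have hlabw : lab w = j := lab.apply_symm_apply j
    have hlt : lab w < lab z := by rw [hlabw, hz2]; exact hj
    have := hadm.2 w z hlt
    have hPw : P w := by
      rcases this with h | h | h
      · exact hP z w hPz (Or.inl (Or.inl h))
      · exact hP z w hPz (Or.inl (Or.inr h))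
      · exact hP z w hPz (Or.inr h)
    rw [hT, Finset.mem_image]
    exact ⟨w, Finset.mem_filter.mpr ⟨Finset.mem_univ _, hPw⟩, hlabw⟩
  have hmem : lab x ∈ T ↔ P x := by
    rw [hT, Finset.mem_image]
    constructor
    · rintro ⟨z, hz, hz2⟩
      have : z = x := lab.injective hz2
      exact this ▸ (Finset.mem_filter.mp hz).2
    · intro hPx
      exact ⟨x, Finset.mem_filter.mpr ⟨Finset.mem_univ _, hPx⟩, rfl⟩
  rw [← hmem, downclosed_iff T hdc, hcard]

theorem stmt7 {X : Type*} [PartialOrder X] [Fintype X] (h : Avoids22 X)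
    (lab₁ lab₂ : X ≃ Fin (Fintype.card X))
    (h₁ : IsAdmissible lab₁) (h₂ : IsAdmissible lab₂)
    {x y : X} (heq : lab₁ x = lab₂ y) : OrdEquiv x y := by
  classical
  -- P₁ : strictly below x; P₂ : below or equivalent to x
  set P₁ : X → Prop := fun z => Rlt z x with hP₁
  set P₂ : X → Prop := fun z => Rlt z x ∨ OrdEquiv z x with hP₂
  have hcl₁ : ∀ z w, P₁ z → (Rlt w z ∨ OrdEquiv w z) → P₁ w := by
    rintro z w hz (hw | hw)
    · exact Rlt_trans hw hz
    · exact Rlt_of_equiv_left (OrdEquiv_symm hw) hz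
  have hcl₂ : ∀ z w, P₂ z → (Rlt w z ∨ OrdEquiv w z) → P₂ w := by
    rintro z w (hz | hz) (hw | hw)
    · exact Or.inl (Rlt_trans hw hz)
    · exact Or.inl (Rlt_of_equiv_left (OrdEquiv_symm hw) hz)
    · exact Or.inl (Rlt_of_equiv_right hz hw)
    · exact Or.inr (OrdEquiv_trans hw hz)
  have hx₁ := mem_iff_lt_card lab₁ h₁ P₁ hcl₁ x
  have hx₂ := mem_iff_lt_card lab₁ h₁ P₂ hcl₂ x
  have hy₁ := mem_iff_lt_card lab₂ h₂ P₁ hcl₁ y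
  have hy₂ := mem_iff_lt_card lab₂ h₂ P₂ hcl₂ y
  have hnx : ¬ P₁ x := Rlt_irrefl x
  have hex : P₂ x := Or.inr (OrdEquiv_refl x)
  rw [hx₁, heq, ← hy₁] at hnx
  rw [hx₂, heq, ← hy₂] at hex
  rcases hex with hr | he
  · exact absurd hr hnx
  · exact OrdEquiv_symm he
end

section
/- Let P₁ and P₂ be interval orders on [n], each endowed with the identity labelling being an admissible labelling. Then the union relation P = P₁ ∪ P₂ (as subsets of [n] × [n]) is a partial order on [n]. -/
variable {n : ℕ}

/-- `P` is a partial order relation on `[n]`, viewed as a set of pairs. -/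
def RIsPO (P : Set (Fin n × Fin n)) : Prop :=
  (∀ x, (x, x) ∈ P) ∧ (∀ x y, (x, y) ∈ P → (y, x) ∈ P → x = y) ∧
  (∀ x y z, (x, y) ∈ P → (y, z) ∈ P → (x, z) ∈ P)

/-- The strict relation associated to `P`. -/
def RSlt (P : Set (Fin n × Fin n)) (x y : Fin n) : Prop := (x, y) ∈ P ∧ x ≠ y

/-- Incomparability in `P`. -/
def RIncomp (P : Set (Fin n × Fin n)) (x y : Fin n) : Prop := (x, y) ∉ P ∧ (y, x) ∉ P

/-- Principal down-set `I_P(x) = {z | z <_P x}`. -/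
def RIset (P : Set (Fin n × Fin n)) (x : Fin n) : Set (Fin n) := {z | RSlt P z x}

/-- Principal up-set `F_P(x) = {z | z >_P x}`. -/
def RFset (P : Set (Fin n × Fin n)) (x : Fin n) : Set (Fin n) := {z | RSlt P x z}

/-- `P` avoids the poset `2+2`. -/
def RAvoids22 (P : Set (Fin n × Fin n)) : Prop :=
  ¬ ∃ a b c d : Fin n, RSlt P a b ∧ RSlt P c d ∧
    RIncomp P a c ∧ RIncomp P a d ∧ RIncomp P b c ∧ RIncomp P b d

/-- The identity labelling of `[n]` is an admissible labelling of `P`. -/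
def RIdAdmissible (P : Set (Fin n × Fin n)) : Prop :=
  (∀ x y, RSlt P x y → x < y) ∧
  ∀ x y : Fin n, x < y →
    RIset P x ⊂ RIset P y ∨ (RIset P x = RIset P y ∧ RFset P x ⊂ RFset P y) ∨
      (RIset P x = RIset P y ∧ RFset P x = RFset P y)

/-- `AV_n(2+2)`: interval orders on `[n]` endowed with the identity admissible labelling. -/
def AVn (n : ℕ) : Set (Set (Fin n × Fin n)) :=
  {P | RIsPO P ∧ RAvoids22 P ∧ RIdAdmissible P}

/-- `P` contains an occurrence of the fence `N` of order four
(strict relations exactly `a < c`, `b < c`, `b < d`). -/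
def RHasN (P : Set (Fin n × Fin n)) : Prop :=
  ∃ a b c d : Fin n, RSlt P a c ∧ RSlt P b c ∧ RSlt P b d ∧
    RIncomp P a b ∧ RIncomp P a d ∧ RIncomp P c d

/-!
An admissible identity labelling makes every relation it labels contained in the integer order
`≤`, so any two such relations have an antisymmetric union. It also makes principal down-sets
grow with the label, so `x <_{P₁} y ≤ z` already gives `x <_{P₁} z`: a mixed chain
`x <_{P₁} y <_{P₂} z` collapses into `P₁`, and transitivity of the union reduces to that of
`P₁` and `P₂`.
-/

namespace RIdAdmissible

variable {P Q : Set (Fin n × Fin n)} {x y z : Fin n}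

lemma le_of_mem (hP : RIdAdmissible P) (hxy : (x, y) ∈ P) : x ≤ y := by
  rcases eq_or_ne x y with rfl | hne
  · exact le_rfl
  · exact (hP.1 x y ⟨hxy, hne⟩).le

lemma le_of_mem_union (hP : RIdAdmissible P) (hQ : RIdAdmissible Q) (hxy : (x, y) ∈ P ∪ Q) :
    x ≤ y :=
  hxy.elim hP.le_of_mem hQ.le_of_mem

lemma iset_mono (hP : RIdAdmissible P) (hyz : y ≤ z) : RIset P y ⊆ RIset P z := by
  rcases hyz.eq_or_lt with rfl | hlt
  · exact subset_rfl
  · rcases hP.2 y z hlt with h | h | h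
    exacts [h.subset, h.1.subset, h.1.subset]

lemma mem_of_slt_of_le (hP : RIdAdmissible P) (hxy : RSlt P x y) (hyz : y ≤ z) : (x, z) ∈ P :=
  (hP.iset_mono hyz hxy).1

lemma mem_union_of_mem_of_mem (hP : RIdAdmissible P) (hQ : RIdAdmissible Q)
    (hxy : (x, y) ∈ P) (hyz : (y, z) ∈ Q) : (x, z) ∈ P ∪ Q := by
  rcases eq_or_ne x y with rfl | hne
  · exact Or.inr hyz
  · exact Or.inl (hP.mem_of_slt_of_le ⟨hxy, hne⟩ (hQ.le_of_mem hyz))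

end RIdAdmissible

theorem stmt11 (P₁ P₂ : Set (Fin n × Fin n)) (h₁ : P₁ ∈ AVn n) (h₂ : P₂ ∈ AVn n) :
    RIsPO (P₁ ∪ P₂) := by
  obtain ⟨⟨refl₁, -, trans₁⟩, -, adm₁⟩ := h₁
  obtain ⟨⟨-, -, trans₂⟩, -, adm₂⟩ := h₂
  refine ⟨fun x => Or.inl (refl₁ x), fun x y hxy hyx => ?_, ?_⟩
  · exact le_antisymm (adm₁.le_of_mem_union adm₂ hxy) (adm₁.le_of_mem_union adm₂ hyx)
  · rintro x y z (hxy | hxy) (hyz | hyz)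
    · exact Or.inl (trans₁ x y z hxy hyz)
    · exact adm₁.mem_union_of_mem_of_mem adm₂ hxy hyz
    · exact Set.union_comm P₂ P₁ ▸ adm₂.mem_union_of_mem_of_mem adm₁ hxy hyz
    · exact Or.inr (trans₂ x y z hxy hyz)
end

section
/- Let T be a finite planar rooted tree with nodes other than the root labelled 1,…,n by the preorder (depth-first, left-to-right) visit. Define a relation R on [n] by x R y iff x = y, or (y is not a descendant of x and x < y as labels). Then R is a partial order on [n] which avoids both 2+2 and the fence N of order four, and the labelling 1,…,n is a linear extension of R. -/
/-- `TreeDesc n par x y` : in the planar rooted tree on nodes `{0,1,…,n}` (root `0`,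
non-root nodes labelled `1,…,n` by the preorder visit) with parent function `par`,
the node `y` is a (proper) descendant of `x`, i.e. `y ∈ u(x)`. -/
def TreeDesc (n : ℕ) (par : ℕ → ℕ) : ℕ → ℕ → Prop :=
  Relation.TransGen (fun a b => a = par b ∧ 1 ≤ b ∧ b ≤ n)

/-- `par` is the parent function of a planar rooted tree whose non-root nodes
are labelled `1,…,n` by the preorder (depth-first, left-to-right) visit:
each node's parent has a smaller label, and each set of descendants `u(x)` is
an interval of consecutive labels starting right after `x`. -/
def IsPreorderTree (n : ℕ) (par : ℕ → ℕ) : Prop :=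
  (∀ x, 1 ≤ x → x ≤ n → par x < x) ∧
  (∀ x y z, TreeDesc n par x y → x < z → z < y → TreeDesc n par x z)

/-- The relation `R` of the poset `P_T` associated to the tree:
`x R y` iff `x = y`, or `y ∉ u(x)` and `x < y` as labels. -/
def TreeRel (n : ℕ) (par : ℕ → ℕ) (x y : ℕ) : Prop :=
  x = y ∨ (¬ TreeDesc n par x y ∧ x < y)

/-- Ground set `[n] = {1,…,n}`. -/
def Gnd (n : ℕ) : Set ℕ := {x | 1 ≤ x ∧ x ≤ n}

/-- Strict relation of `R`. -/
def TreeSlt (n : ℕ) (par : ℕ → ℕ) (x y : ℕ) : Prop := TreeRel n par x y ∧ x ≠ y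

/-- Incomparability in `R`. -/
def TreeIncomp (n : ℕ) (par : ℕ → ℕ) (x y : ℕ) : Prop :=
  ¬ TreeRel n par x y ∧ ¬ TreeRel n par y x

/-- Principal down-set of `x` in `P_T`, inside the ground set. -/
def TreeIset (n : ℕ) (par : ℕ → ℕ) (x : ℕ) : Set ℕ :=
  {z | z ∈ Gnd n ∧ TreeSlt n par z x}

/-- Principal up-set of `x` in `P_T`, inside the ground set. -/
def TreeFset (n : ℕ) (par : ℕ → ℕ) (x : ℕ) : Set ℕ :=
  {z | z ∈ Gnd n ∧ TreeSlt n par x z}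

/-!
Incomparable elements of `R` are exactly ancestor–descendant pairs, and `x <_R y` means that
`y` comes after the whole block `u(x)` in preorder (since `u(x)` is an interval of labels starting
right after `x`). Hence a descendant of `x` lies strictly below everything that `x` lies strictly
below. In a `2+2` or an `N`, take an incomparable pair `x ∥ z` (so `z ∈ u(x)`) with `x` below a
further element `y`: then `z <_R y`, contradicting an incomparability of the configuration.
-/

section PreorderTree

variable {n : ℕ} {par : ℕ → ℕ} {a b c d x y z : ℕ}

theorem treeSlt_iff : TreeSlt n par x y ↔ ¬ TreeDesc n par x y ∧ x < y := by
  constructor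
  · rintro ⟨rfl | h, hne⟩
    · exact absurd rfl hne
    · exact h
  · intro h
    exact ⟨Or.inr h, h.2.ne⟩

theorem TreeSlt.lt (h : TreeSlt n par x y) : x < y := (treeSlt_iff.1 h).2

theorem TreeIncomp.symm (h : TreeIncomp n par x y) : TreeIncomp n par y x := ⟨h.2, h.1⟩

theorem TreeIncomp.ne (h : TreeIncomp n par x y) : x ≠ y := fun e => h.1 (Or.inl e)

theorem TreeIncomp.treeDesc (h : TreeIncomp n par x y) (hxy : x < y) : TreeDesc n par x y :=
  by_contra fun hd => h.1 (Or.inr ⟨hd, hxy⟩)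

theorem TreeSlt.of_treeDesc (hT : IsPreorderTree n par) (hxz : TreeDesc n par x z)
    (hxy : TreeSlt n par x y) : TreeSlt n par z y := by
  obtain ⟨hny, hlt⟩ := treeSlt_iff.1 hxy
  refine treeSlt_iff.2 ⟨fun hzy => hny (hxz.trans hzy), ?_⟩
  rcases lt_trichotomy z y with h | rfl | h
  · exact h
  · exact absurd hxz hny
  · exact absurd (hT.2 x z y hxz hlt h) hny

theorem TreeIncomp.treeSlt_of_treeSlt (hT : IsPreorderTree n par) (hxz : TreeIncomp n par x z)
    (hlt : x < z) (hxy : TreeSlt n par x y) : TreeSlt n par z y :=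
  hxy.of_treeDesc hT (hxz.treeDesc hlt)

theorem treeRel_antisymm (hxy : TreeRel n par x y) (hyx : TreeRel n par y x) : x = y := by
  rcases hxy with h | ⟨_, hlt⟩
  · exact h
  · rcases hyx with h | ⟨_, hgt⟩
    · exact h.symm
    · exact absurd hgt hlt.asymm

theorem treeRel_trans (hT : IsPreorderTree n par) (hxy : TreeRel n par x y)
    (hyz : TreeRel n par y z) : TreeRel n par x z := by
  rcases hxy with rfl | ⟨hnxy, hxy⟩
  · exact hyz
  rcases hyz with rfl | ⟨_, hyz⟩
  · exact Or.inr ⟨hnxy, hxy⟩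
  exact Or.inr ⟨fun hxz => hnxy (hT.2 x z y hxz hxy hyz), hxy.trans hyz⟩

theorem not_two_plus_two (hT : IsPreorderTree n par) (hab : TreeSlt n par a b)
    (hcd : TreeSlt n par c d) (hac : TreeIncomp n par a c) (had : TreeIncomp n par a d)
    (hbc : TreeIncomp n par b c) : False := by
  rcases lt_trichotomy a c with h | rfl | h
  · exact hbc.2 (hac.treeSlt_of_treeSlt hT h hab).1
  · exact hac.ne rfl
  · exact had.1 (hac.symm.treeSlt_of_treeSlt hT h hcd).1

theorem not_fence (hT : IsPreorderTree n par) (hac : TreeSlt n par a c)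
    (hbd : TreeSlt n par b d) (hab : TreeIncomp n par a b) (had : TreeIncomp n par a d)
    (hcd : TreeIncomp n par c d) : False := by
  rcases lt_trichotomy a b with h | rfl | h
  · exact hcd.2 (had.treeSlt_of_treeSlt hT (h.trans hbd.lt) hac).1
  · exact hab.ne rfl
  · exact had.1 (hab.symm.treeSlt_of_treeSlt hT h hbd).1

end PreorderTree

theorem stmt15 (n : ℕ) (par : ℕ → ℕ) (hT : IsPreorderTree n par) :
    -- R is a partial order on [n]
    (∀ x ∈ Gnd n, TreeRel n par x x) ∧
    (∀ x ∈ Gnd n, ∀ y ∈ Gnd n, TreeRel n par x y → TreeRel n par y x → x = y) ∧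
    (∀ x ∈ Gnd n, ∀ y ∈ Gnd n, ∀ z ∈ Gnd n,
      TreeRel n par x y → TreeRel n par y z → TreeRel n par x z) ∧
    -- the labelling 1,…,n is a linear extension of R
    (∀ x ∈ Gnd n, ∀ y ∈ Gnd n, TreeSlt n par x y → x < y) ∧
    -- R avoids 2+2
    (¬ ∃ a ∈ Gnd n, ∃ b ∈ Gnd n, ∃ c ∈ Gnd n, ∃ d ∈ Gnd n,
      TreeSlt n par a b ∧ TreeSlt n par c d ∧ TreeIncomp n par a c ∧
      TreeIncomp n par a d ∧ TreeIncomp n par b c ∧ TreeIncomp n par b d) ∧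
    -- R avoids the fence N of order four
    (¬ ∃ a ∈ Gnd n, ∃ b ∈ Gnd n, ∃ c ∈ Gnd n, ∃ d ∈ Gnd n,
      TreeSlt n par a c ∧ TreeSlt n par b c ∧ TreeSlt n par b d ∧
      TreeIncomp n par a b ∧ TreeIncomp n par a d ∧ TreeIncomp n par c d) := by
  refine ⟨fun _ _ => Or.inl rfl, fun _ _ _ _ => treeRel_antisymm,
    fun _ _ _ _ _ _ => treeRel_trans hT, fun _ _ _ _ => TreeSlt.lt, ?_, ?_⟩
  · rintro ⟨a, -, b, -, c, -, d, -, hab, hcd, hac, had, hbc, -⟩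
    exact not_two_plus_two hT hab hcd hac had hbc
  · rintro ⟨a, -, b, -, c, -, d, -, hac, -, hbd, hab, had, hcd⟩
    exact not_fence hT hac hbd hab had hcd
end

section
/- The set AV_n(2+2, N) of series parallel interval orders on [n] is closed under the meet of the lattice (AV_n(2+2), ≤_T): if P₁ and P₂ avoid both 2+2 and N (with the identity labelling admissible for each), then P₁ ∪ P₂ avoids N (and 2+2), so AV_n(2+2, N) is a meet subsemilattice of AV_n(2+2). -/
variable {n : ℕ}

/-!
With the identity labelling admissible, `x ↦ I_P(x)` is monotone in the label, which already
forces `P₁ ∪ P₂` to be a partial order avoiding `2+2` and controls its down-sets. What remains is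
the up-set half of admissibility and `N`-avoidance, and both reduce to one property of an
`N`-free `P ∈ AV_n(2+2)`: if `a < d` are incomparable, then `F_P(a) ⊆ F_P(d)`. Otherwise some
`c >_P a` is incomparable to `d`; as `I_P(a) = I_P(d)` would give `F_P(a) ⊆ F_P(d)`, there is
`w <_P d` with `w ≮_P a`, and `a, w, c, d` form an `N` or a `2+2` according as `w <_P c` or not.
-/

section Labelling

variable {P : Set (Fin n × Fin n)}

theorem RIdAdmissible.monotone_rIset (hA : RIdAdmissible P) : Monotone (RIset P) := by
  intro x y hxy
  rcases hxy.eq_or_lt with rfl | hlt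
  · exact subset_rfl
  rcases hA.2 x y hlt with h | h | h
  · exact h.subset
  · exact h.1.subset
  · exact h.1.subset

theorem RIdAdmissible.rFset_subset {x y : Fin n} (hA : RIdAdmissible P) (hxy : x < y)
    (hI : RIset P x = RIset P y) : RFset P x ⊆ RFset P y := by
  rcases hA.2 x y hxy with h | h | h
  · exact absurd hI h.ne
  · exact h.2.subset
  · exact h.2.subset

theorem rIdAdmissible_of_monotone (hlt : ∀ x y, RSlt P x y → x < y)
    (hI : Monotone (RIset P))
    (hF : ∀ x y, x < y → RIset P x = RIset P y → RFset P x ⊆ RFset P y) :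
    RIdAdmissible P := by
  refine ⟨hlt, fun x y hxy => ?_⟩
  rcases (hI hxy.le).ssubset_or_eq with hIlt | hIeq
  · exact Or.inl hIlt
  rcases (hF x y hxy hIeq).ssubset_or_eq with hFlt | hFeq
  · exact Or.inr (Or.inl ⟨hIeq, hFlt⟩)
  · exact Or.inr (Or.inr ⟨hIeq, hFeq⟩)

theorem rIsPO_of_monotone (hrefl : ∀ x, (x, x) ∈ P) (hlt : ∀ x y, RSlt P x y → x < y)
    (hI : Monotone (RIset P)) : RIsPO P := by
  refine ⟨hrefl, fun x y hxy hyx => ?_, fun x y z hxy hyz => ?_⟩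
  · by_contra hne
    exact (hlt x y ⟨hxy, hne⟩).asymm (hlt y x ⟨hyx, Ne.symm hne⟩)
  · rcases eq_or_ne x y with rfl | hxy'
    · exact hyz
    rcases eq_or_ne y z with rfl | hyz'
    · exact hxy
    exact (hI (hlt y z ⟨hyz, hyz'⟩).le (show x ∈ RIset P y from ⟨hxy, hxy'⟩)).1

theorem rAvoids22_of_monotone (hI : Monotone (RIset P)) : RAvoids22 P := by
  rintro ⟨a, b, c, d, hab, hcd, -, had, hbc, -⟩
  rcases le_total b d with hbd | hdb
  · exact had.1 (hI hbd hab).1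
  · exact hbc.2 (hI hdb hcd).1

theorem rIncomp_of_lt_of_not_rSlt (hlt : ∀ x y, RSlt P x y → x < y) {x y : Fin n}
    (hxy : x < y) (hnot : ¬ RSlt P x y) : RIncomp P x y :=
  ⟨fun h => hnot ⟨h, hxy.ne⟩, fun h => (hlt y x ⟨h, hxy.ne'⟩).not_gt hxy⟩

theorem rFset_subset_of_lt_of_rIncomp (hP : P ∈ AVn n) (hN : ¬ RHasN P) {a d : Fin n}
    (had : a < d) (hinc : RIncomp P a d) : RFset P a ⊆ RFset P d := by
  obtain ⟨⟨-, -, htrans⟩, h22, hA⟩ := hP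
  intro c hac
  by_contra hdc
  have hcd : RIncomp P c d :=
    ⟨fun h => hinc.1 (htrans _ _ _ hac.1 h),
      fun h => hdc ⟨h, fun hdc' => hinc.1 (hdc' ▸ hac.1)⟩⟩
  by_cases hI : RIset P d ⊆ RIset P a
  · exact hdc (hA.rFset_subset had ((hA.monotone_rIset had.le).antisymm hI) hac)
  obtain ⟨w, hwd, hwa⟩ := Set.not_subset.1 hI
  have haw : RIncomp P a w :=
    ⟨fun h => hinc.1 (htrans _ _ _ h hwd.1),
      fun h => hwa ⟨h, fun hwa' => hinc.1 (hwa' ▸ hwd.1)⟩⟩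
  by_cases hwc : (w, c) ∈ P
  · exact hN ⟨a, w, c, d, hac, ⟨hwc, fun hwc' => hcd.1 (hwc' ▸ hwd.1)⟩, hwd, haw, hinc, hcd⟩
  · exact h22 ⟨a, c, w, d, hac, hwd, haw, hinc, ⟨fun h => hcd.1 (htrans _ _ _ h hwd.1), hwc⟩, hcd⟩

end Labelling

section Union

variable {P₁ P₂ : Set (Fin n × Fin n)}

theorem rSlt_union {x y : Fin n} : RSlt (P₁ ∪ P₂) x y ↔ RSlt P₁ x y ∨ RSlt P₂ x y := by
  simp only [RSlt, Set.mem_union, or_and_right]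

theorem rIset_union (x : Fin n) : RIset (P₁ ∪ P₂) x = RIset P₁ x ∪ RIset P₂ x :=
  Set.ext fun _ => rSlt_union

theorem rFset_union (x : Fin n) : RFset (P₁ ∪ P₂) x = RFset P₁ x ∪ RFset P₂ x :=
  Set.ext fun _ => rSlt_union

theorem rIncomp_union {x y : Fin n} :
    RIncomp (P₁ ∪ P₂) x y ↔ RIncomp P₁ x y ∧ RIncomp P₂ x y := by
  simp only [RIncomp, Set.mem_union, not_or]
  tauto

variable (h₁ : P₁ ∈ AVn n) (h₂ : P₂ ∈ AVn n)
include h₁ h₂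

theorem lt_of_rSlt_union {x y : Fin n} (h : RSlt (P₁ ∪ P₂) x y) : x < y :=
  (rSlt_union.1 h).elim (h₁.2.2.1 x y) (h₂.2.2.1 x y)

theorem monotone_rIset_union : Monotone (RIset (P₁ ∪ P₂)) := fun x y hxy => by
  simp only [rIset_union]
  exact Set.union_subset_union (h₁.2.2.monotone_rIset hxy) (h₂.2.2.monotone_rIset hxy)

variable (hN₁ : ¬ RHasN P₁) (hN₂ : ¬ RHasN P₂)
include hN₁ hN₂

theorem rFset_union_subset {x y : Fin n} (hxy : x < y)
    (hI : RIset (P₁ ∪ P₂) x = RIset (P₁ ∪ P₂) y) : RFset (P₁ ∪ P₂) x ⊆ RFset (P₁ ∪ P₂) y := by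
  have hnot : ¬ RSlt (P₁ ∪ P₂) x y := fun h => (hI ▸ h : x ∈ RIset (P₁ ∪ P₂) x).2 rfl
  obtain ⟨hinc₁, hinc₂⟩ := rIncomp_union.1 <|
    rIncomp_of_lt_of_not_rSlt (fun _ _ => lt_of_rSlt_union h₁ h₂) hxy hnot
  simp only [rFset_union]
  exact Set.union_subset_union (rFset_subset_of_lt_of_rIncomp h₁ hN₁ hxy hinc₁)
    (rFset_subset_of_lt_of_rIncomp h₂ hN₂ hxy hinc₂)

theorem not_rHasN_union : ¬ RHasN (P₁ ∪ P₂) := by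
  rintro ⟨a, b, c, d, hac, -, hbd, hab, had, hcd⟩
  have had' : a < d := lt_of_not_ge fun hda =>
    hab.2 (monotone_rIset_union h₁ h₂ hda hbd).1
  obtain ⟨had₁, had₂⟩ := rIncomp_union.1 had
  rcases rSlt_union.1 hac with hac | hac
  · exact hcd.2 (Or.inl (rFset_subset_of_lt_of_rIncomp h₁ hN₁ had' had₁ hac).1)
  · exact hcd.2 (Or.inr (rFset_subset_of_lt_of_rIncomp h₂ hN₂ had' had₂ hac).1)

end Union

theorem stmt17 (P₁ P₂ : Set (Fin n × Fin n))
    (h₁ : P₁ ∈ AVn n) (h₂ : P₂ ∈ AVn n)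
    (hN₁ : ¬ RHasN P₁) (hN₂ : ¬ RHasN P₂) :
    P₁ ∪ P₂ ∈ AVn n ∧ ¬ RHasN (P₁ ∪ P₂) := by
  have hlt : ∀ x y, RSlt (P₁ ∪ P₂) x y → x < y := fun _ _ => lt_of_rSlt_union h₁ h₂
  have hI := monotone_rIset_union h₁ h₂
  refine ⟨⟨rIsPO_of_monotone (fun x => Or.inl (h₁.1.1 x)) hlt hI, rAvoids22_of_monotone hI,
    rIdAdmissible_of_monotone hlt hI fun _ _ => rFset_union_subset h₁ h₂ hN₁ hN₂⟩,
    not_rHasN_union h₁ h₂ hN₁ hN₂⟩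
end
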